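/- arXiv:1504.01175 — 8 statements merged into one kernel-verified Lean document; each statement's English description precedes it below -/
import Mathlib

section
/- Let K be a field of characteristic 2 and E the elliptic curve Y² + XY = X³ + AX² + B over K with B ≠ 0. For x₁, x₂, x₃ in the algebraic closure of K, one has (x₁x₂ + x₁x₃ + x₂x₃)² + x₁x₂x₃ + B = 0 if and only if there exist y₁, y₂, y₃ in the algebraic closure such that (xᵢ, yᵢ) lies on E for i = 1,2,3 and (x₁,y₁) + (x₂,y₂) + (x₃,y₃) = ∞ in the group law of E. -/
/-!
Substituting a line `Y = ℓX + ν` into `Y² + XY = X³ + a₂X² + a₆` gives, in characteristic 2,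
the cubic `X³ + (ℓ² + ℓ + a₂)X² + νX + (ν² + a₆)`. Three points sum to zero exactly when they are
the three intersections (with multiplicity) of `E` with a line, so by Vieta `e₂ = ν` and
`e₃ = ν² + a₆`, whence `S₃ = e₂² + e₃ + a₆ = 0`. Conversely, if `S₃ = 0`, choose `ℓ` with
`ℓ² + ℓ = e₁ + a₂` (possible over an algebraically closed field) and `ν = e₂`: the cubic is then
`(X - x₁)(X - x₂)(X - x₃)`, so the points `(xᵢ, ℓxᵢ + ν)` lie on `E` and on one line.
-/

open Polynomial in
lemma IsAlgClosed.exists_sq_add_self_eq {F : Type*} [Field F] [IsAlgClosed F] (c : F) :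
    ∃ ℓ : F, ℓ ^ 2 + ℓ = c := by
  obtain ⟨ℓ, hℓ⟩ := IsAlgClosed.exists_root (X ^ 2 + X - C c) (by
    rw [show (X ^ 2 + X - C c : F[X]).degree = 2 by compute_degree!]
    exact two_ne_zero)
  exact ⟨ℓ, by simpa [sub_eq_zero] using hℓ⟩

namespace WeierstrassCurve.Affine

open Polynomial

variable {F : Type*} [Field F] {W : Affine F}

lemma negY_inj {x y₁ y₂ : F} : W.negY x y₁ = W.negY x y₂ ↔ y₁ = y₂ :=
  ⟨fun h => by rw [← W.negY_negY x y₁, h, negY_negY], congrArg _⟩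

section Point

variable [DecidableEq F]

lemma Point.some_add_some_add_some_eq_zero_iff {x₁ x₂ x₃ y₁ y₂ y₃ : F}
    (h₁ : W.Nonsingular x₁ y₁) (h₂ : W.Nonsingular x₂ y₂) (h₃ : W.Nonsingular x₃ y₃) :
    some _ _ h₁ + some _ _ h₂ + some _ _ h₃ = 0 ↔ ¬(x₁ = x₂ ∧ y₁ = W.negY x₂ y₂) ∧
      x₃ = W.addX x₁ x₂ (W.slope x₁ x₂ y₁ y₂) ∧
      y₃ = W.negAddY x₁ x₂ y₁ (W.slope x₁ x₂ y₁ y₂) := by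
  rw [add_eq_zero_iff_eq_neg, neg_some]
  by_cases hxy : x₁ = x₂ ∧ y₁ = W.negY x₂ y₂
  · simp [hxy]
  · rw [add_some hxy, some.injEq, addY]
    constructor
    · rintro ⟨hx, hy⟩
      exact ⟨hxy, hx.symm, (negY_inj.mp (hx ▸ hy)).symm⟩
    · rintro ⟨-, hx, hy⟩
      exact ⟨hx.symm, by rw [← hx, hy]⟩

lemma prod_X_sub_C_eq_neg_addPolynomial {x₁ x₂ x₃ y₁ y₂ y₃ : F}
    {h₁ : W.Nonsingular x₁ y₁} {h₂ : W.Nonsingular x₂ y₂} {h₃ : W.Nonsingular x₃ y₃}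
    (h : Point.some _ _ h₁ + Point.some _ _ h₂ + Point.some _ _ h₃ = 0) :
    (X - C x₁) * (X - C x₂) * (X - C x₃) = -W.addPolynomial x₁ y₁ (W.slope x₁ x₂ y₁ y₂) := by
  obtain ⟨hxy, hx, -⟩ := (Point.some_add_some_add_some_eq_zero_iff h₁ h₂ h₃).mp h
  rw [addPolynomial_slope h₁.1 h₂.1 hxy, neg_neg, hx]

end Point

section CharTwo

variable [CharP F 2] [IsCharTwoJNeZeroNF W]

lemma negY_of_isCharTwoJNeZeroNF_of_char_two (x y : F) : W.negY x y = y + x := by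
  rw [negY, a₁_of_isCharTwoJNeZeroNF, a₃_of_isCharTwoJNeZeroNF]
  linear_combination (-y - x) * CharTwo.two_eq_zero (R := F)

lemma equation_mul_add_iff_of_char_two (x ℓ ν : F) : W.Equation x (ℓ * x + ν) ↔
    x ^ 3 + (ℓ ^ 2 + ℓ + W.a₂) * x ^ 2 + ν * x + (ν ^ 2 + W.a₆) = 0 := by
  rw [equation_iff, a₁_of_isCharTwoJNeZeroNF, a₃_of_isCharTwoJNeZeroNF, a₄_of_isCharTwoJNeZeroNF]
  constructor <;> intro h <;>
    linear_combination (-h) + (ℓ ^ 2 * x ^ 2 + ℓ * x ^ 2 + ν * x + ν ^ 2 + ℓ * x * ν) *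
      CharTwo.two_eq_zero (R := F)

variable [DecidableEq F]

lemma slope_mul_add_of_char_two {x₁ x₂ ℓ ν : F} (hx : x₁ = x₂ → x₁ ≠ 0 ∧ ν = x₁ ^ 2) :
    W.slope x₁ x₂ (ℓ * x₁ + ν) (ℓ * x₂ + ν) = ℓ := by
  by_cases hx₁₂ : x₁ = x₂
  · obtain ⟨hx₁, hν⟩ := hx hx₁₂
    subst hx₁₂
    have hy : ℓ * x₁ + ν ≠ W.negY x₁ (ℓ * x₁ + ν) := by
      rwa [negY_of_isCharTwoJNeZeroNF_of_char_two, ne_eq, left_eq_add]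
    rw [slope_of_Y_ne rfl hy, div_eq_iff (sub_ne_zero.mpr hy),
      negY_of_isCharTwoJNeZeroNF_of_char_two, a₁_of_isCharTwoJNeZeroNF, a₄_of_isCharTwoJNeZeroNF]
    linear_combination (-hν) + (x₁ ^ 2 + W.a₂ * x₁) * CharTwo.two_eq_zero (R := F)
  · rw [slope_of_X_ne hx₁₂, div_eq_iff (sub_ne_zero.mpr hx₁₂)]
    ring

lemma summation_eq_zero_of_add_eq_zero {x₁ x₂ x₃ y₁ y₂ y₃ : F}
    {h₁ : W.Nonsingular x₁ y₁} {h₂ : W.Nonsingular x₂ y₂} {h₃ : W.Nonsingular x₃ y₃}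
    (h : Point.some _ _ h₁ + Point.some _ _ h₂ + Point.some _ _ h₃ = 0) :
    (x₁ * x₂ + x₁ * x₃ + x₂ * x₃) ^ 2 + x₁ * x₂ * x₃ + W.a₆ = 0 := by
  have hcubic := prod_X_sub_C_eq_neg_addPolynomial h
  rw [addPolynomial_eq, neg_neg, Cubic.prod_X_sub_C_eq, Cubic.toPoly_injective] at hcubic
  obtain ⟨-, -, he₂, he₃⟩ := Cubic.mk.inj hcubic
  simp only [a₁_of_isCharTwoJNeZeroNF, a₃_of_isCharTwoJNeZeroNF,
    a₄_of_isCharTwoJNeZeroNF] at he₂ he₃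
  set ℓ := W.slope x₁ x₂ y₁ y₂
  -- modulo 2, `he₂` and `he₃` read `e₂ = ℓx₁ + y₁` and `e₃ = e₂² + a₆`
  linear_combination (x₁ * x₂ + x₁ * x₃ + x₂ * x₃ + 2 * x₁ * ℓ ^ 2 + x₁ * ℓ - 2 * y₁ * ℓ - y₁) * he₂
    - he₃ + ((x₁ * ℓ - y₁) ^ 2 + (2 * x₁ * ℓ ^ 2 - 2 * y₁ * ℓ) * (x₁ * ℓ - y₁)
      + 2 * (x₁ * ℓ ^ 2 - y₁ * ℓ) ^ 2) * CharTwo.two_eq_zero (R := F)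

lemma exists_add_eq_zero_of_summation_eq_zero [IsAlgClosed F] (ha₆ : W.a₆ ≠ 0) {x₁ x₂ x₃ : F}
    (hS : (x₁ * x₂ + x₁ * x₃ + x₂ * x₃) ^ 2 + x₁ * x₂ * x₃ + W.a₆ = 0) :
    ∃ (y₁ y₂ y₃ : F) (h₁ : W.Nonsingular x₁ y₁) (h₂ : W.Nonsingular x₂ y₂)
      (h₃ : W.Nonsingular x₃ y₃),
        Point.some _ _ h₁ + Point.some _ _ h₂ + Point.some _ _ h₃ = 0 := by
  obtain ⟨ℓ, hℓ⟩ := IsAlgClosed.exists_sq_add_self_eq (x₁ + x₂ + x₃ + W.a₂)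
  set ν := x₁ * x₂ + x₁ * x₃ + x₂ * x₃
  have hroot : ∀ x, x = x₁ ∨ x = x₂ ∨ x = x₃ → W.Nonsingular x (ℓ * x + ν) := by
    intro x hx
    refine (W.equation_iff_nonsingular_of_Δ_ne_zero ?_).mp
      ((equation_mul_add_iff_of_char_two x ℓ ν).mpr ?_)
    · rwa [Δ_of_isCharTwoJNeZeroNF_of_char_two]
    · have hprod : (x - x₁) * (x - x₂) * (x - x₃) = 0 := by
        rcases hx with rfl | rfl | rfl <;> ring
      linear_combination hprod + x ^ 2 * hℓ - hS
        + (x ^ 2 * (x₁ + x₂ + x₃ + W.a₂) + x₁ * x₂ * x₃ + ν ^ 2 + W.a₆) *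
          CharTwo.two_eq_zero (R := F)
  refine ⟨_, _, _, hroot x₁ (by simp), hroot x₂ (by simp), hroot x₃ (by simp), ?_⟩
  have hx₁ : x₁ = x₂ → x₁ ≠ 0 := by
    rintro rfl rfl
    exact ha₆ (by linear_combination hS)
  have hν : x₁ = x₂ → ν = x₁ ^ 2 := by
    rintro rfl
    linear_combination x₁ * x₃ * CharTwo.two_eq_zero (R := F)
  rw [Point.some_add_some_add_some_eq_zero_iff,
    slope_mul_add_of_char_two fun h => ⟨hx₁ h, hν h⟩,
    negY_of_isCharTwoJNeZeroNF_of_char_two]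
  have hx₃ : x₃ = W.addX x₁ x₂ ℓ := by
    rw [addX, a₁_of_isCharTwoJNeZeroNF]
    linear_combination -hℓ
  refine ⟨fun ⟨hx, hy⟩ => hx₁ hx (by linear_combination (1 + ℓ) * hx - hy), hx₃, ?_⟩
  rw [negAddY, ← hx₃]
  ring

theorem summation_eq_zero_iff_exists_add_eq_zero [IsAlgClosed F] (ha₆ : W.a₆ ≠ 0) (x₁ x₂ x₃ : F) :
    (x₁ * x₂ + x₁ * x₃ + x₂ * x₃) ^ 2 + x₁ * x₂ * x₃ + W.a₆ = 0 ↔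
      ∃ (y₁ y₂ y₃ : F) (h₁ : W.Nonsingular x₁ y₁) (h₂ : W.Nonsingular x₂ y₂)
        (h₃ : W.Nonsingular x₃ y₃), Point.some _ _ h₁ + Point.some _ _ h₂ + Point.some _ _ h₃ = 0 :=
  ⟨exists_add_eq_zero_of_summation_eq_zero ha₆,
    fun ⟨_, _, _, _, _, _, h⟩ => summation_eq_zero_of_add_eq_zero h⟩

end CharTwo

end WeierstrassCurve.Affine

open WeierstrassCurve

open Classical in
/-- In characteristic 2, for the elliptic curve `Y² + XY = X³ + AX² + B`
with `B ≠ 0`, elements `x₁ x₂ x₃` of the algebraic closure satisfy the third summation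
polynomial `(x₁x₂ + x₁x₃ + x₂x₃)² + x₁x₂x₃ + B = 0` iff there are `y₁ y₂ y₃` such that
the points `(xᵢ, yᵢ)` lie on the curve and sum to the point at infinity. -/
theorem stmt0 {K : Type*} [Field K] [CharP K 2] (A B : K) (hB : B ≠ 0)
    (W : WeierstrassCurve.Affine (AlgebraicClosure K))
    (hW : W = { a₁ := 1, a₂ := algebraMap K (AlgebraicClosure K) A, a₃ := 0, a₄ := 0,
                a₆ := algebraMap K (AlgebraicClosure K) B })
    (x₁ x₂ x₃ : AlgebraicClosure K) :
    (x₁ * x₂ + x₁ * x₃ + x₂ * x₃) ^ 2 + x₁ * x₂ * x₃ + algebraMap K (AlgebraicClosure K) B = 0 ↔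
      ∃ (y₁ y₂ y₃ : AlgebraicClosure K) (h₁ : W.Nonsingular x₁ y₁) (h₂ : W.Nonsingular x₂ y₂)
        (h₃ : W.Nonsingular x₃ y₃),
        Affine.Point.some _ _ h₁ + Affine.Point.some _ _ h₂ + Affine.Point.some _ _ h₃ = 0 := by
  have : IsCharTwoJNeZeroNF W := by
    subst hW
    exact ⟨rfl, rfl, rfl⟩
  have ha₆ : W.a₆ = algebraMap K (AlgebraicClosure K) B := by rw [hW]
  rw [← ha₆]
  exact Affine.summation_eq_zero_iff_exists_add_eq_zero (ha₆ ▸ (map_ne_zero _).mpr hB) x₁ x₂ x₃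
end

section
/- Let K be a field of characteristic not 2 or 3 and E the elliptic curve Y² = X³ + AX + B over K. For x₁, x₂, x₃ in the algebraic closure of K, one has S₃(x₁,x₂,x₃) = 0, where S₃(x₁,x₂,x₃) = (x₁−x₂)²x₃² − 2[(x₁+x₂)(x₁x₂+A) + 2B]x₃ + (x₁x₂−A)² − 4B(x₁+x₂), if and only if there exist y₁, y₂, y₃ in the algebraic closure with (xᵢ,yᵢ) on E and (x₁,y₁) + (x₂,y₂) + (x₃,y₃) = ∞. -/
/-!
Write `f(X) = X³ + AX + B`, `d = x₁ - x₂` and `C = (x₁ + x₂)(x₁x₂ + A) + 2B`. The summation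
polynomial satisfies the identity `d² S₃(x₁, x₂, X) = (d² X - C)² - 4 f(x₁) f(x₂)`. If `yᵢ² = f(xᵢ)`
and `x₁ ≠ x₂`, the chord formula gives `d² x(P₁ ± P₂) = C ∓ 2 y₁ y₂`, so
`S₃(x₁, x₂, X) = d² (X - x(P₁ + P₂)) (X - x(P₁ - P₂))`; for `x₁ = x₂` the tangent formula gives
`S₃(x₁, x₁, X) = -4 y₁² (X - x(2 P₁))`, and `y₁ = 0` is impossible there because it would make `x₁`
a double root of `f`. Since `P₁ + P₂ + P₃ = ∞` says exactly that `P₁ + P₂ ≠ ∞` and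
`P₃ = -(P₁ + P₂)`, and over an algebraically closed field every `x` lifts to a point, the zeros of
`S₃` are exactly the `x`-coordinates of the triples of points summing to `∞`.
-/

open WeierstrassCurve WeierstrassCurve.Affine

namespace WeierstrassCurve.Affine.Point

variable {F : Type*} [Field F] [DecidableEq F] {W : Affine F}

theorem exists_some_add_some_add_some_eq_zero_iff {x₁ x₂ x₃ y₁ y₂ : F}
    (h₁ : W.Nonsingular x₁ y₁) (h₂ : W.Nonsingular x₂ y₂) :
    (∃ (y₃ : F) (h₃ : W.Nonsingular x₃ y₃), some _ _ h₁ + some _ _ h₂ + some _ _ h₃ = 0) ↔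
      ¬(x₁ = x₂ ∧ y₁ = W.negY x₂ y₂) ∧ W.addX x₁ x₂ (W.slope x₁ x₂ y₁ y₂) = x₃ := by
  constructor
  · rintro ⟨y₃, h₃, hsum⟩
    by_cases hxy : x₁ = x₂ ∧ y₁ = W.negY x₂ y₂
    · rw [add_of_Y_eq hxy.1 hxy.2, zero_add] at hsum
      exact absurd hsum (some_ne_zero h₃)
    · rw [add_some hxy, add_eq_zero_iff_eq_neg, neg_some, some.injEq] at hsum
      exact ⟨hxy, hsum.1⟩
  · rintro ⟨hxy, rfl⟩
    refine ⟨_, nonsingular_negAdd h₁ h₂ hxy, ?_⟩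
    rw [add_some hxy, add_eq_zero_iff_eq_neg, neg_some, some.injEq]
    exact ⟨rfl, rfl⟩

end WeierstrassCurve.Affine.Point

section ShortWeierstrass

variable {F : Type*} [Field F] (a b : F)

def shortWeierstrass : Affine F := { a₁ := 0, a₂ := 0, a₃ := 0, a₄ := a, a₆ := b }

def summationPoly3 (x₁ x₂ x₃ : F) : F :=
  (x₁ - x₂) ^ 2 * x₃ ^ 2 - 2 * ((x₁ + x₂) * (x₁ * x₂ + a) + 2 * b) * x₃
    + (x₁ * x₂ - a) ^ 2 - 4 * b * (x₁ + x₂)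

theorem sq_mul_summationPoly3 (x₁ x₂ x₃ : F) :
    (x₁ - x₂) ^ 2 * summationPoly3 a b x₁ x₂ x₃ =
      ((x₁ - x₂) ^ 2 * x₃ - ((x₁ + x₂) * (x₁ * x₂ + a) + 2 * b)) ^ 2
        - 4 * (x₁ ^ 3 + a * x₁ + b) * (x₂ ^ 3 + a * x₂ + b) := by
  simp only [summationPoly3]
  ring

variable {a b}

theorem summationPoly3_self_of_eq_zero {x : F} (e : x ^ 3 + a * x + b = 0) (x₃ : F) :
    summationPoly3 a b x x x₃ = (3 * x ^ 2 + a) ^ 2 := by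
  simp only [summationPoly3]
  linear_combination (-8 * x - 4 * x₃) * e

theorem discr_eq_zero_of_double_root {x : F} (e : x ^ 3 + a * x + b = 0)
    (e' : 3 * x ^ 2 + a = 0) : 4 * a ^ 3 + 27 * b ^ 2 = 0 := by
  linear_combination (4 * (a ^ 2 - 3 * a * x ^ 2 + 9 * x ^ 4) - 27 * x * (b + 2 * x ^ 3)) * e'
    + 27 * (b + 2 * x ^ 3) * e

theorem shortWeierstrass_equation_iff {x y : F} :
    (shortWeierstrass a b).Equation x y ↔ y ^ 2 = x ^ 3 + a * x + b := by
  rw [equation_iff]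
  simp [shortWeierstrass]

theorem shortWeierstrass_negY (x y : F) : (shortWeierstrass a b).negY x y = -y := by
  simp [shortWeierstrass]

theorem shortWeierstrass_Δ : (shortWeierstrass a b).Δ = -16 * (4 * a ^ 3 + 27 * b ^ 2) := by
  simp only [shortWeierstrass, Δ, b₂, b₄, b₆, b₈]
  ring

theorem shortWeierstrass_nonsingular_iff (h2 : (2 : F) ≠ 0) (hab : 4 * a ^ 3 + 27 * b ^ 2 ≠ 0)
    {x y : F} : (shortWeierstrass a b).Nonsingular x y ↔ y ^ 2 = x ^ 3 + a * x + b := by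
  have hΔ : (shortWeierstrass a b).Δ ≠ 0 := by
    rw [shortWeierstrass_Δ, show (-16 : F) = -2 ^ 4 by norm_num]
    exact mul_ne_zero (neg_ne_zero.mpr (pow_ne_zero 4 h2)) hab
  rw [← equation_iff_nonsingular_of_Δ_ne_zero hΔ, shortWeierstrass_equation_iff]

variable [DecidableEq F]

theorem sq_mul_addX_slope_of_X_ne {x₁ x₂ y₁ y₂ : F} (e₁ : y₁ ^ 2 = x₁ ^ 3 + a * x₁ + b)
    (e₂ : y₂ ^ 2 = x₂ ^ 3 + a * x₂ + b) (hx : x₁ ≠ x₂) :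
    (x₁ - x₂) ^ 2 * (shortWeierstrass a b).addX x₁ x₂ ((shortWeierstrass a b).slope x₁ x₂ y₁ y₂)
      = (x₁ + x₂) * (x₁ * x₂ + a) + 2 * b - 2 * y₁ * y₂ := by
  have hx' : x₁ - x₂ ≠ 0 := sub_ne_zero.mpr hx
  simp only [addX, slope_of_X_ne hx, shortWeierstrass]
  field_simp
  linear_combination e₁ + e₂

theorem summationPoly3_of_X_ne {x₁ x₂ y₁ y₂ : F} (e₁ : y₁ ^ 2 = x₁ ^ 3 + a * x₁ + b)
    (e₂ : y₂ ^ 2 = x₂ ^ 3 + a * x₂ + b) (hx : x₁ ≠ x₂) (x₃ : F) :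
    summationPoly3 a b x₁ x₂ x₃ = (x₁ - x₂) ^ 2
      * (x₃ - (shortWeierstrass a b).addX x₁ x₂ ((shortWeierstrass a b).slope x₁ x₂ y₁ y₂))
      * (x₃ - (shortWeierstrass a b).addX x₁ x₂ ((shortWeierstrass a b).slope x₁ x₂ y₁ (-y₂))) := by
  have hX_add := sq_mul_addX_slope_of_X_ne e₁ e₂ hx
  have hX_sub := sq_mul_addX_slope_of_X_ne e₁ (by rwa [neg_sq]) hx
  refine mul_left_cancel₀ (pow_ne_zero 2 (sub_ne_zero.mpr hx)) ?_
  linear_combination sq_mul_summationPoly3 a b x₁ x₂ x₃ + 4 * y₂ ^ 2 * e₁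
    + 4 * (x₁ ^ 3 + a * x₁ + b) * e₂
    + ((x₁ - x₂) ^ 2 * x₃ - ((x₁ + x₂) * (x₁ * x₂ + a) + 2 * b - 2 * y₁ * -y₂)) * hX_add
    + ((x₁ - x₂) ^ 2 * x₃ - (x₁ - x₂) ^ 2 * (shortWeierstrass a b).addX x₁ x₂
        ((shortWeierstrass a b).slope x₁ x₂ y₁ y₂)) * hX_sub

theorem sq_mul_addX_slope_self {x y : F} (e : y ^ 2 = x ^ 3 + a * x + b) (hy : y ≠ -y) :
    (2 * y) ^ 2 * (shortWeierstrass a b).addX x x ((shortWeierstrass a b).slope x x y y)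
      = (x ^ 2 - a) ^ 2 - 8 * b * x := by
  have h2y : 2 * y ≠ 0 := fun h => hy (by linear_combination h)
  have hslope : (shortWeierstrass a b).slope x x y y = (3 * x ^ 2 + a) / (2 * y) := by
    rw [slope_of_Y_ne rfl (by rwa [shortWeierstrass_negY])]
    simp only [negY, shortWeierstrass]
    congr 1 <;> ring
  rw [addX, hslope]
  simp only [shortWeierstrass, zero_mul, add_zero, sub_zero]
  rw [div_pow, mul_sub, mul_sub, mul_div_cancel₀ _ (pow_ne_zero 2 h2y)]
  linear_combination (-8 * x) * e

theorem summationPoly3_self {x y : F} (e : y ^ 2 = x ^ 3 + a * x + b) (hy : y ≠ -y) (x₃ : F) :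
    summationPoly3 a b x x x₃ = -(2 * y) ^ 2
      * (x₃ - (shortWeierstrass a b).addX x x ((shortWeierstrass a b).slope x x y y)) := by
  simp only [summationPoly3]
  linear_combination 4 * x₃ * e - sq_mul_addX_slope_self e hy

theorem summationPoly3_addX_slope_eq_zero {x₁ x₂ y₁ y₂ : F}
    (e₁ : y₁ ^ 2 = x₁ ^ 3 + a * x₁ + b) (e₂ : y₂ ^ 2 = x₂ ^ 3 + a * x₂ + b)
    (hxy : ¬(x₁ = x₂ ∧ y₁ = -y₂)) :
    summationPoly3 a b x₁ x₂
      ((shortWeierstrass a b).addX x₁ x₂ ((shortWeierstrass a b).slope x₁ x₂ y₁ y₂)) = 0 := by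
  rcases eq_or_ne x₁ x₂ with rfl | hx
  · have hy : y₁ ≠ -y₂ := fun h => hxy ⟨rfl, h⟩
    obtain rfl : y₁ = y₂ := by
      have : (y₁ - y₂) * (y₁ + y₂) = 0 := by linear_combination e₁ - e₂
      rcases mul_eq_zero.mp this with h | h
      · exact sub_eq_zero.mp h
      · exact absurd (eq_neg_of_add_eq_zero_left h) hy
    rw [summationPoly3_self e₁ hy, sub_self, mul_zero]
  · rw [summationPoly3_of_X_ne e₁ e₂ hx, sub_self, mul_zero, zero_mul]

theorem exists_addX_slope_eq_of_summationPoly3_eq_zero [IsAlgClosed F] (h2 : (2 : F) ≠ 0)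
    (hab : 4 * a ^ 3 + 27 * b ^ 2 ≠ 0) {x₁ x₂ x₃ : F} (hS : summationPoly3 a b x₁ x₂ x₃ = 0) :
    ∃ y₁ y₂ : F, y₁ ^ 2 = x₁ ^ 3 + a * x₁ + b ∧ y₂ ^ 2 = x₂ ^ 3 + a * x₂ + b ∧
      ¬(x₁ = x₂ ∧ y₁ = -y₂) ∧
      (shortWeierstrass a b).addX x₁ x₂ ((shortWeierstrass a b).slope x₁ x₂ y₁ y₂) = x₃ := by
  obtain ⟨y₁, e₁⟩ := IsAlgClosed.exists_pow_nat_eq (x₁ ^ 3 + a * x₁ + b) two_pos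
  rcases eq_or_ne x₁ x₂ with rfl | hx
  · have h2y : 2 * y₁ ≠ 0 := by
      refine mul_ne_zero h2 fun hy0 => hab ?_
      have e : x₁ ^ 3 + a * x₁ + b = 0 := by rw [← e₁, hy0, sq, mul_zero]
      rw [summationPoly3_self_of_eq_zero e] at hS
      exact discr_eq_zero_of_double_root e (pow_eq_zero_iff two_ne_zero |>.mp hS)
    have hy : y₁ ≠ -y₁ := fun h => h2y (by linear_combination h)
    refine ⟨y₁, y₁, e₁, e₁, fun h => hy h.2, ?_⟩
    rw [summationPoly3_self e₁ hy, mul_eq_zero, neg_eq_zero, sub_eq_zero] at hS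
    exact (hS.resolve_left (pow_ne_zero 2 h2y)).symm
  · obtain ⟨y₂, e₂⟩ := IsAlgClosed.exists_pow_nat_eq (x₂ ^ 3 + a * x₂ + b) two_pos
    rw [summationPoly3_of_X_ne e₁ e₂ hx, mul_eq_zero, mul_eq_zero, sub_eq_zero, sub_eq_zero]
      at hS
    rcases hS with (hd | hS) | hS
    · exact absurd (pow_eq_zero_iff two_ne_zero |>.mp hd) (sub_ne_zero.mpr hx)
    · exact ⟨y₁, y₂, e₁, e₂, fun h => hx h.1, hS.symm⟩
    · exact ⟨y₁, -y₂, e₁, by rwa [neg_sq], fun h => hx h.1, hS.symm⟩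

theorem summationPoly3_eq_zero_iff [IsAlgClosed F] (h2 : (2 : F) ≠ 0)
    (hab : 4 * a ^ 3 + 27 * b ^ 2 ≠ 0) (x₁ x₂ x₃ : F) :
    summationPoly3 a b x₁ x₂ x₃ = 0 ↔
      ∃ (y₁ y₂ y₃ : F) (h₁ : (shortWeierstrass a b).Nonsingular x₁ y₁)
        (h₂ : (shortWeierstrass a b).Nonsingular x₂ y₂)
        (h₃ : (shortWeierstrass a b).Nonsingular x₃ y₃),
        Point.some _ _ h₁ + Point.some _ _ h₂ + Point.some _ _ h₃ = 0 := by
  have hns {x y : F} := shortWeierstrass_nonsingular_iff (x := x) (y := y) h2 hab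
  constructor
  · intro hS
    obtain ⟨y₁, y₂, e₁, e₂, hxy, hx₃⟩ := exists_addX_slope_eq_of_summationPoly3_eq_zero h2 hab hS
    have h₁ := hns.mpr e₁
    have h₂ := hns.mpr e₂
    obtain ⟨y₃, h₃, hsum⟩ := (Point.exists_some_add_some_add_some_eq_zero_iff h₁ h₂).mpr
      ⟨by rwa [shortWeierstrass_negY], hx₃⟩
    exact ⟨y₁, y₂, y₃, h₁, h₂, h₃, hsum⟩
  · rintro ⟨y₁, y₂, y₃, h₁, h₂, h₃, hsum⟩
    obtain ⟨hxy, rfl⟩ :=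
      (Point.exists_some_add_some_add_some_eq_zero_iff h₁ h₂).mp ⟨y₃, h₃, hsum⟩
    rw [shortWeierstrass_negY] at hxy
    exact summationPoly3_addX_slope_eq_zero (hns.mp h₁) (hns.mp h₂) hxy

end ShortWeierstrass

open Classical in
/-- In characteristic ≥ 5, for the elliptic curve `Y² = X³ + AX + B`
(nonsingular: `4A³ + 27B² ≠ 0`), elements `x₁ x₂ x₃` of the algebraic closure satisfy
`S₃(x₁,x₂,x₃) = (x₁−x₂)²x₃² − 2[(x₁+x₂)(x₁x₂+A)+2B]x₃ + (x₁x₂−A)² − 4B(x₁+x₂) = 0`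
iff there are `y₁ y₂ y₃` with the points `(xᵢ,yᵢ)` on the curve summing to infinity. -/
theorem stmt1 {K : Type*} [Field K] (hchar2 : ringChar K ≠ 2) (hchar3 : ringChar K ≠ 3)
    (A B : K) (hns : 4 * A ^ 3 + 27 * B ^ 2 ≠ 0)
    (W : WeierstrassCurve.Affine (AlgebraicClosure K))
    (hW : W = { a₁ := 0, a₂ := 0, a₃ := 0, a₄ := algebraMap K (AlgebraicClosure K) A,
                a₆ := algebraMap K (AlgebraicClosure K) B })
    (x₁ x₂ x₃ : AlgebraicClosure K) :
    (x₁ - x₂) ^ 2 * x₃ ^ 2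
        - 2 * ((x₁ + x₂) * (x₁ * x₂ + algebraMap K (AlgebraicClosure K) A)
            + 2 * algebraMap K (AlgebraicClosure K) B) * x₃
        + (x₁ * x₂ - algebraMap K (AlgebraicClosure K) A) ^ 2
        - 4 * algebraMap K (AlgebraicClosure K) B * (x₁ + x₂) = 0 ↔
      ∃ (y₁ y₂ y₃ : AlgebraicClosure K) (h₁ : W.Nonsingular x₁ y₁) (h₂ : W.Nonsingular x₂ y₂)
        (h₃ : W.Nonsingular x₃ y₃),
        Affine.Point.some _ _ h₁ + Affine.Point.some _ _ h₂ + Affine.Point.some _ _ h₃ = 0 := by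
  subst hW
  have h2 := (map_ne_zero (algebraMap K (AlgebraicClosure K))).mpr (Ring.two_ne_zero hchar2)
  rw [map_ofNat] at h2
  have hab := (map_ne_zero (algebraMap K (AlgebraicClosure K))).mpr hns
  rw [map_add, map_mul, map_mul, map_pow, map_pow, map_ofNat, map_ofNat] at hab
  exact summationPoly3_eq_zero_iff h2 hab x₁ x₂ x₃
end

section
/- Let E be an elliptic curve over a finite field F_q and let Sₘ denote its m-th summation polynomial. If x₁, …, x_t ∈ F_q and R = (R_X, R_Y) is an affine point of E(F_q) with S_{t+1}(x₁, …, x_t, R_X) = 0, then there exist y₁, …, y_t in the quadratic extension F_{q²} such that each (xᵢ, yᵢ) lies on E and (x₁,y₁) + (x₂,y₂) + ⋯ + (x_t,y_t) + R = ∞ in E over the algebraic closure. -/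
/-!
The points of `E` over the algebraic closure with a given `X`-coordinate `a` form a fibre
`{P, -P}`. If `a ∈ F_q`, the `q`-power Frobenius maps this fibre to itself and commutes with
negation, so its square fixes `P`: the `Y`-coordinate lies in `F_{q²}`. The vanishing of
`S_{t+1}` yields points `P₁, …, P_t, Q` summing to `∞` with `Q = ±R`; negating all of them if
necessary gives `Q = R`.
-/

open WeierstrassCurve MvPolynomial

namespace WeierstrassCurve.Affine

lemma pow_card_sq_eq_self_of_equation {F K : Type*} [Field F] [Fintype F] [Field K]
    [Algebra F K] (W : Affine F) {a : F} {z : K}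
    (h : (W.baseChange K).toAffine.Equation (algebraMap F K a) z) :
    z ^ Fintype.card F ^ 2 = z := by
  set σ := FiniteField.frobeniusAlgHom F K
  have hσ : (W.baseChange K).toAffine.Equation (algebraMap F K a) (σ z) := by
    have := h.map (σ : K →+* K)
    rwa [map_baseChange, AlgHom.coe_toRingHom, σ.commutes] at this
  have hσσ : σ (σ z) = z := by
    rcases Y_eq_of_X_eq hσ h rfl with hz | hz
    · rw [hz, hz]
    · rw [hz, ← baseChange_negY, σ.commutes, hz, negY_negY]
  simpa only [σ, FiniteField.coe_frobeniusAlgHom, ← pow_mul, ← sq] using hσσ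

variable {K : Type*} [Field K] [DecidableEq K] {W : Affine K}

lemma exists_sum_add_some_eq_zero_of_sum_snoc {t : ℕ} {x : Fin t → K} {X Y : K}
    {y : Fin (t + 1) → K} (h : ∀ i, W.Nonsingular (Fin.snoc (α := fun _ => K) x X i) (y i))
    (hsum : ∑ i, Point.some _ _ (h i) = 0) (hR : W.Nonsingular X Y) :
    ∃ (y' : Fin t → K) (h' : ∀ i, W.Nonsingular (x i) (y' i)),
      ∑ i, Point.some _ _ (h' i) + Point.some _ _ hR = 0 := by
  have hP (i : Fin t) : W.Nonsingular (x i) (y i.castSucc) := by simpa using h i.castSucc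
  have hQ : W.Nonsingular X (y (Fin.last t)) := by simpa using h (Fin.last t)
  have hsum' : ∑ i, Point.some _ _ (hP i) + Point.some _ _ hQ = 0 := by
    simpa [Fin.sum_univ_castSucc] using hsum
  rcases (Point.X_eq_iff (h₁ := hQ) (h₂ := hR)).mp rfl with hQR | hQR
  · exact ⟨_, hP, hQR ▸ hsum'⟩
  · refine ⟨fun i => W.negY (x i) (y i.castSucc), fun i => (nonsingular_neg ..).mpr (hP i), ?_⟩
    rw [← neg_neg (Point.some _ _ hR), ← hQR]
    simp_rw [← Point.neg_some (hP _), Finset.sum_neg_distrib, ← neg_add, hsum', neg_zero]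

end WeierstrassCurve.Affine

open Classical in
/-- over a finite field `F_q`, if `S_{t+1}(x₁,…,x_t,R_X) = 0` for
`x₁,…,x_t ∈ F_q` and an affine point `R = (R_X,R_Y) ∈ E(F_q)`, then there exist
`y₁,…,y_t` lying in the quadratic extension `F_{q²}` (inside the algebraic closure,
i.e. `yᵢ^(q²) = yᵢ`) such that each `(xᵢ,yᵢ)` is on `E` and
`(x₁,y₁) + ⋯ + (x_t,y_t) + R = ∞`.  Here the summation polynomials `Sₘ` are
characterized by: `Sₘ(x₁,…,xₘ) = 0` iff there are `yᵢ` in the algebraic closure with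
`(xᵢ,yᵢ) ∈ E` and `∑ᵢ (xᵢ,yᵢ) = ∞`. -/
theorem stmt4 {F : Type*} [Field F] [Fintype F] (W : WeierstrassCurve.Affine F)
    (S : ∀ m : ℕ, MvPolynomial (Fin m) F)
    (hS : ∀ (m : ℕ) (x : Fin m → AlgebraicClosure F),
      eval x ((S m).map (algebraMap F (AlgebraicClosure F))) = 0 ↔
        ∃ (y : Fin m → AlgebraicClosure F)
          (h : ∀ i, (W.baseChange (AlgebraicClosure F)).toAffine.Nonsingular (x i) (y i)),
          ∑ i, Affine.Point.some _ _ (h i) = 0)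
    (t : ℕ) (x : Fin t → F) (RX RY : F) (hR : W.Nonsingular RX RY)
    (hzero : eval
        (Fin.snoc (fun i => algebraMap F (AlgebraicClosure F) (x i))
          (algebraMap F (AlgebraicClosure F) RX))
        ((S (t + 1)).map (algebraMap F (AlgebraicClosure F))) = 0) :
    ∃ y : Fin t → AlgebraicClosure F,
      (∀ i, (y i) ^ (Fintype.card F) ^ 2 = y i) ∧
      ∃ (h : ∀ i, (W.baseChange (AlgebraicClosure F)).toAffine.Nonsingular
          (algebraMap F (AlgebraicClosure F) (x i)) (y i))
        (hR' : (W.baseChange (AlgebraicClosure F)).toAffine.Nonsingular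
          (algebraMap F (AlgebraicClosure F) RX) (algebraMap F (AlgebraicClosure F) RY)),
        (∑ i, Affine.Point.some _ _ (h i)) + Affine.Point.some _ _ hR' = 0 := by
  obtain ⟨y, hy, hsum⟩ := (hS (t + 1) _).mp hzero
  have hR' := (W.map_nonsingular (algebraMap F (AlgebraicClosure F)).injective RX RY).mpr hR
  obtain ⟨y', hy', hsum'⟩ := Affine.exists_sum_add_some_eq_zero_of_sum_snoc hy hsum hR'
  exact ⟨y', fun i => W.pow_card_sq_eq_self_of_equation (hy' i).1, hy', hR', hsum'⟩
end

section
/- Let E be an elliptic curve over F_q, let R ∈ E(F_q) be an affine point, and suppose points (x₁,y₁), …, (x_t,y_t) ∈ E(F_{q²}) satisfy (x₁,y₁) + ⋯ + (x_t,y_t) + R = ∞, where x₁,…,x_t ∈ F_q, y₁,…,y_s ∈ F_{q²} \ F_q and y_{s+1},…,y_t ∈ F_q with s > 0. If the partial sum G = (x_{s+1},y_{s+1}) + ⋯ + (x_t,y_t) satisfies G + R ≠ ∞, then H = (x₁,y₁) + ⋯ + (x_s,y_s) is a point of E(F_q) of order exactly 2; in particular s ≥ 2. -/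
/-!
The Frobenius `a ↦ a ^ q` of `F_{q²}/F_q` induces a group endomorphism `φ` of `E(F_{q²})` whose
fixed points are the points of `E(F_q)`. It fixes `R` and every summand of `G`, and negates every
`(xᵢ, yᵢ)` with `i ≤ s`, because `φ yᵢ ≠ yᵢ` is another root of the Weierstrass equation at `xᵢ`.
So `φ H = -H`, while `H = -(G + R)` gives `φ H = H`: hence `2H = 0`, `H ≠ 0`, and `H` is rational.
If `s = 1`, rationality of `H = (x₁, y₁)` would contradict `y₁ ∉ F_q`.
-/

open WeierstrassCurve

theorem FiniteField.pow_card_eq_self_iff_mem_range {K L : Type*} [Field K] [Fintype K] [Field L]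
    [Finite L] [Algebra K L] (a : L) :
    a ^ Fintype.card K = a ↔ a ∈ Set.range (algebraMap K L) := by
  refine ⟨fun ha ↦ (IsGalois.mem_range_algebraMap_iff_fixed a).mpr fun f ↦ ?_, ?_⟩
  · obtain ⟨n, rfl⟩ := (bijective_frobeniusAlgEquivOfAlgebraic_pow K L).2 f
    rw [AlgEquiv.coe_pow, coe_frobeniusAlgEquivOfAlgebraic]
    exact Function.IsFixedPt.iterate ha n
  · rintro ⟨b, rfl⟩
    rw [← map_pow, FiniteField.pow_card]

namespace WeierstrassCurve.Affine.Point

variable {K L : Type*} [Field K] [Field L] [Algebra K L] [DecidableEq L] {W : Affine K}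
  (φ : L →ₐ[K] L)

lemma map_some_eq_self {x y : L} (h : (W.baseChange L).toAffine.Nonsingular x y)
    (hx : φ x = x) (hy : φ y = y) : map φ (some _ _ h) = some _ _ h := by
  simp only [map_some, hx, hy]

lemma map_some_eq_neg {x : K} {y : L}
    (h : (W.baseChange L).toAffine.Nonsingular (algebraMap K L x) y) (hy : φ y ≠ y) :
    map φ (some _ _ h) = -some _ _ h := by
  have hφ : (W.baseChange L).toAffine.Equation (algebraMap K L x) (φ y) := by
    simpa only [AlgHom.commutes] using
      ((W.baseChange_nonsingular φ.injective (algebraMap K L x) y).mpr h).1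
  have hneg := (Affine.Y_eq_of_X_eq hφ h.1 rfl).resolve_left hy
  simp only [map_some, neg_some, AlgHom.commutes, hneg]

lemma exists_eq_some_algebraMap_of_map_eq_self
    (hfix : ∀ a, φ a = a ↔ a ∈ Set.range (algebraMap K L))
    {P : (W.baseChange L).toAffine.Point} (hP : map φ P = P) (hP0 : P ≠ 0) :
    ∃ (xP yP : K)
      (h : (W.baseChange L).toAffine.Nonsingular (algebraMap K L xP) (algebraMap K L yP)),
      P = some _ _ h := by
  rcases P with _ | @⟨x, y, h⟩
  · exact absurd rfl hP0
  obtain ⟨hx, hy⟩ := some.inj hP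
  obtain ⟨xP, rfl⟩ := (hfix x).mp hx
  obtain ⟨yP, rfl⟩ := (hfix y).mp hy
  exact ⟨xP, yP, h, rfl⟩

end WeierstrassCurve.Affine.Point

open Classical in
theorem stmt5_general {Fq F2 : Type*} [Field Fq] [Fintype Fq] [Field F2] [Fintype F2] [Algebra Fq F2]
    (W : WeierstrassCurve.Affine Fq)
    (t s : ℕ) (hs : 0 < s) (hst : s ≤ t)
    (x : Fin t → Fq) (y : Fin t → F2)
    (h : ∀ i, (W.baseChange F2).toAffine.Nonsingular (algebraMap Fq F2 (x i)) (y i))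
    (hy₁ : ∀ i : Fin t, (i : ℕ) < s → y i ∉ Set.range (algebraMap Fq F2))
    (hy₂ : ∀ i : Fin t, s ≤ (i : ℕ) → y i ∈ Set.range (algebraMap Fq F2))
    (Rx Ry : Fq)
    (hR2 : (W.baseChange F2).toAffine.Nonsingular (algebraMap Fq F2 Rx) (algebraMap Fq F2 Ry))
    (hsum : (∑ i, Affine.Point.some _ _ (h i)) + Affine.Point.some _ _ hR2 = 0)
    (hG : (∑ i ∈ Finset.univ.filter fun i : Fin t => s ≤ (i : ℕ), Affine.Point.some _ _ (h i))
        + Affine.Point.some _ _ hR2 ≠ 0) :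
    (∃ (xH yH : Fq)
        (hH : (W.baseChange F2).toAffine.Nonsingular (algebraMap Fq F2 xH) (algebraMap Fq F2 yH)),
        (∑ i ∈ Finset.univ.filter fun i : Fin t => (i : ℕ) < s, Affine.Point.some _ _ (h i))
          = Affine.Point.some _ _ hH) ∧
      addOrderOf (∑ i ∈ Finset.univ.filter fun i : Fin t => (i : ℕ) < s,
        Affine.Point.some _ _ (h i)) = 2 ∧
      2 ≤ s := by
  open Affine.Point in
  set φ := FiniteField.frobeniusAlgHom Fq F2
  have hfix (a : F2) : φ a = a ↔ a ∈ Set.range (algebraMap Fq F2) :=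
    FiniteField.pow_card_eq_self_iff_mem_range a
  set H := ∑ i ∈ Finset.univ.filter fun i : Fin t => (i : ℕ) < s, some _ _ (h i)
  set GR := (∑ i ∈ Finset.univ.filter fun i : Fin t => s ≤ (i : ℕ), some _ _ (h i)) + some _ _ hR2
  have hHGR : H + GR = 0 := by
    rw [← hsum, ← Finset.sum_filter_add_sum_filter_not Finset.univ fun i : Fin t => (i : ℕ) < s,
      add_assoc]
    simp only [not_lt, H, GR]
  have hΦH : map φ H = -H := by
    rw [map_sum, ← Finset.sum_neg_distrib]
    refine Finset.sum_congr rfl fun i hi ↦ map_some_eq_neg φ (h i) (mt (hfix _).mp ?_)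
    exact hy₁ i (Finset.mem_filter.mp hi).2
  have hΦGR : map φ GR = GR := by
    rw [map_add, map_sum, map_some_eq_self φ hR2 (φ.commutes _) (φ.commutes _)]
    refine congrArg (· + _) (Finset.sum_congr rfl fun i hi ↦ map_some_eq_self φ _ (φ.commutes _) ?_)
    exact (hfix _).mpr (hy₂ i (Finset.mem_filter.mp hi).2)
  have hH0 : H ≠ 0 := fun hH ↦ hG (by simpa [hH] using hHGR)
  have hΦH' : map φ H = H := by rw [eq_neg_of_add_eq_zero_left hHGR, map_neg, hΦGR]
  have h2H : 2 • H = 0 := by rw [two_nsmul, ← neg_add_cancel H, ← hΦH, hΦH']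
  obtain ⟨xH, yH, hH, hHeq⟩ := exists_eq_some_algebraMap_of_map_eq_self φ hfix hΦH' hH0
  refine ⟨⟨xH, yH, hH, hHeq⟩, addOrderOf_eq_prime h2H hH0, ?_⟩
  by_contra! hs2
  let i₀ : Fin t := ⟨0, hs.trans_le hst⟩
  have hH₀ : H = some _ _ (h i₀) := by
    have : (Finset.univ.filter fun i : Fin t => (i : ℕ) < s) = {i₀} := by
      ext i
      simp only [Finset.mem_filter, Finset.mem_univ, true_and, Finset.mem_singleton, Fin.ext_iff,
        i₀]
      omega
    simp only [H, this, Finset.sum_singleton]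
  obtain ⟨-, hy₀⟩ := some.inj (hH₀.symm.trans hHeq)
  exact hy₁ i₀ hs ⟨yH, hy₀.symm⟩

open Classical in
/-- let `E` be an elliptic curve over `F_q`, `R ∈ E(F_q)` affine, and
`(x₁,y₁), …, (x_t,y_t) ∈ E(F_{q²})` with all `xᵢ ∈ F_q`, the first `s > 0` of the `yᵢ`
in `F_{q²} \ F_q` and the rest in `F_q`, such that `(x₁,y₁) + ⋯ + (x_t,y_t) + R = ∞`.
If `G = (x_{s+1},y_{s+1}) + ⋯ + (x_t,y_t)` satisfies `G + R ≠ ∞`, then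
`H = (x₁,y₁) + ⋯ + (x_s,y_s)` is a point of `E(F_q)` of order exactly `2`;
in particular `s ≥ 2`. -/
theorem stmt5 {Fq F2 : Type*} [Field Fq] [Fintype Fq] [Field F2] [Fintype F2] [Algebra Fq F2]
    (hdim : Module.finrank Fq F2 = 2)
    (W : WeierstrassCurve.Affine Fq)
    (t s : ℕ) (hs : 0 < s) (hst : s ≤ t)
    (x : Fin t → Fq) (y : Fin t → F2)
    (h : ∀ i, (W.baseChange F2).toAffine.Nonsingular (algebraMap Fq F2 (x i)) (y i))
    (hy₁ : ∀ i : Fin t, (i : ℕ) < s → y i ∉ Set.range (algebraMap Fq F2))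
    (hy₂ : ∀ i : Fin t, s ≤ (i : ℕ) → y i ∈ Set.range (algebraMap Fq F2))
    (Rx Ry : Fq) (hR : W.Nonsingular Rx Ry)
    (hR2 : (W.baseChange F2).toAffine.Nonsingular (algebraMap Fq F2 Rx) (algebraMap Fq F2 Ry))
    (hsum : (∑ i, Affine.Point.some _ _ (h i)) + Affine.Point.some _ _ hR2 = 0)
    (hG : (∑ i ∈ Finset.univ.filter fun i : Fin t => s ≤ (i : ℕ), Affine.Point.some _ _ (h i))
        + Affine.Point.some _ _ hR2 ≠ 0) :
    (∃ (xH yH : Fq)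
        (hH : (W.baseChange F2).toAffine.Nonsingular (algebraMap Fq F2 xH) (algebraMap Fq F2 yH)),
        (∑ i ∈ Finset.univ.filter fun i : Fin t => (i : ℕ) < s, Affine.Point.some _ _ (h i))
          = Affine.Point.some _ _ hH) ∧
      addOrderOf (∑ i ∈ Finset.univ.filter fun i : Fin t => (i : ℕ) < s,
        Affine.Point.some _ _ (h i)) = 2 ∧
      2 ≤ s :=
  stmt5_general W t s hs hst x y h hy₁ hy₂ Rx Ry hR2 hsum hG
end

section
/- Conversely, every solution of the chain system S₃(u₁,x₁,x₂) = 0, S₃(u_i,u_{i+1},x_{i+2}) = 0 for 1 ≤ i ≤ t−3, S₃(u_{t−2},x_t,R_X) = 0 (with x₁,…,x_t, u₁,…,u_{t−2} in the algebraic closure) yields a solution of the single equation S_{t+1}(x₁,…,x_t,R_X) = 0, where S_{t+1} is the (t+1)-th summation polynomial. -/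
/-!
If `Q₁ + ⋯ + Qₐ + U = 0` and `U' + R₁ + ⋯ + R_b = 0` where `U` and `U'` have the same
`X`-coordinate, then `U' = ±U`; after replacing every `Rⱼ` by `∓Rⱼ`, which keeps its
`X`-coordinate, the two relations glue to `Q₁ + ⋯ + Qₐ ± R₁ ± ⋯ ± R_b = 0`. Gluing the
three-term relations of the chain one after the other eliminates `u₁, …, u_{t−2}`.
-/

open WeierstrassCurve MvPolynomial Finset Function

namespace WeierstrassCurve.Affine

variable {F : Type*} [Field F] {W : Affine F}

lemma Point.xRep_eq_iff_exists_eq_some {P : W.Point} {a : F} :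
    P.xRep = ![a, 1] ↔ ∃ (b : F) (h : W.Nonsingular a b), P = .some a b h := by
  constructor
  · cases P with
    | zero => simp [Point.xRep]
    | some x y h =>
      intro hx
      simp only [Point.xRep_some, Matrix.vecCons_inj, and_true] at hx
      subst hx
      exact ⟨y, h, rfl⟩
  · rintro ⟨b, h, rfl⟩
    rfl

variable [DecidableEq F]

lemma Point.exists_add_add_eq_zero_of_xRep_eq {A U U' B C : W.Point} (hU : U'.xRep = U.xRep)
    (hA : A + U = 0) (h : U' + B + C = 0) :
    ∃ B' C' : W.Point, B'.xRep = B.xRep ∧ C'.xRep = C.xRep ∧ A + B' + C' = 0 := by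
  rcases Point.eq_or_eq_neg_of_xRep_eq_xRep hU with rfl | rfl
  · refine ⟨-B, -C, Point.xRep_neg B, Point.xRep_neg C, ?_⟩
    calc A + -B + -C = (A + U') - (U' + B + C) := by abel
      _ = 0 := by rw [hA, h, sub_zero]
  · refine ⟨B, C, rfl, rfl, ?_⟩
    calc A + B + C = (A + U) + (-U + B + C) := by abel
      _ = 0 := by rw [hA, h, add_zero]

/-- `x` lies in the zero locus of the summation polynomial `S_m`, `m = card ι`. -/
def IsZeroSumXCoords (W : Affine F) {ι : Type*} [Fintype ι] (x : ι → F) : Prop :=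
  ∃ P : ι → W.Point, (∀ i, (P i).xRep = ![x i, 1]) ∧ ∑ i, P i = 0

section IsZeroSumXCoords

variable {ι κ : Type*} [Fintype ι] [Fintype κ]

lemma isZeroSumXCoords_iff {x : ι → F} :
    IsZeroSumXCoords W x ↔ ∃ (y : ι → F) (h : ∀ i, W.Nonsingular (x i) (y i)),
      ∑ i, Point.some (x i) (y i) (h i) = 0 := by
  constructor
  · rintro ⟨P, hP, hsum⟩
    choose y h hPy using fun i => Point.xRep_eq_iff_exists_eq_some.1 (hP i)
    exact ⟨y, h, by simpa only [← hPy] using hsum⟩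
  · rintro ⟨y, h, hsum⟩
    exact ⟨fun i => .some (x i) (y i) (h i), fun i => rfl, hsum⟩

lemma IsZeroSumXCoords.comp_equiv {x : ι → F} (hx : IsZeroSumXCoords W x) (e : κ ≃ ι) :
    IsZeroSumXCoords W (x ∘ e) := by
  obtain ⟨P, hP, hsum⟩ := hx
  exact ⟨P ∘ e, fun i => hP (e i), (e.sum_comp P).trans hsum⟩

lemma isZeroSumXCoords_fin_iff {m : ℕ} {v : ℕ → F} :
    IsZeroSumXCoords W (fun i : Fin m => v i) ↔
      ∃ P : ℕ → W.Point, (∀ j < m, (P j).xRep = ![v j, 1]) ∧ ∑ j ∈ range m, P j = 0 := by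
  constructor
  · rintro ⟨P, hP, hsum⟩
    refine ⟨fun j => if h : j < m then P ⟨j, h⟩ else 0, fun j hj => by simpa [hj] using hP ⟨j, hj⟩,
      ?_⟩
    rw [← Fin.sum_univ_eq_sum_range]
    simpa using hsum
  · rintro ⟨P, hP, hsum⟩
    exact ⟨fun i => P i, fun i => hP i i.isLt, by rwa [Fin.sum_univ_eq_sum_range (fun j => P j)]⟩

lemma IsZeroSumXCoords.exists_add_add_eq_zero {a b c : F} (h : IsZeroSumXCoords W ![a, b, c]) :
    ∃ P Q R : W.Point, P.xRep = ![a, 1] ∧ Q.xRep = ![b, 1] ∧ R.xRep = ![c, 1] ∧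
      P + Q + R = 0 := by
  obtain ⟨P, hP, hsum⟩ := h
  exact ⟨P 0, P 1, P 2, hP 0, hP 1, hP 2, by rwa [Fin.sum_univ_three] at hsum⟩

end IsZeroSumXCoords

/-- The resultant step `S_{n+3}(v₀, …, vₙ, w_{n+1}, w_{n+2})` from `S_{n+2}(v₀, …, v_{n+1})` and
`S₃(v_{n+1}, w_{n+1}, w_{n+2})`, at the level of zeros. -/
lemma IsZeroSumXCoords.splice {n : ℕ} {v w : ℕ → F}
    (hv : IsZeroSumXCoords W (fun i : Fin (n + 2) => v i)) (hvw : ∀ j ≤ n, w j = v j)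
    (h : IsZeroSumXCoords W ![v (n + 1), w (n + 1), w (n + 2)]) :
    IsZeroSumXCoords W (fun i : Fin (n + 2 + 1) => w i) := by
  rw [isZeroSumXCoords_fin_iff] at hv ⊢
  obtain ⟨P, hP, hsum⟩ := hv
  obtain ⟨U, B, C, hU, hB, hC, hUBC⟩ := h.exists_add_add_eq_zero
  rw [sum_range_succ] at hsum
  obtain ⟨B', C', hB', hC', hsum'⟩ :=
    Point.exists_add_add_eq_zero_of_xRep_eq (hU.trans (hP (n + 1) (by omega)).symm) hsum hUBC
  refine ⟨update (update P (n + 1) B') (n + 2) C', fun j hj => ?_, ?_⟩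
  · rcases (by omega : j ≤ n ∨ j = n + 1 ∨ j = n + 2) with hj | rfl | rfl
    · rw [update_of_ne (by omega), update_of_ne (by omega), hvw j hj]
      exact hP j (by omega)
    · rw [update_of_ne (by omega), update_self, hB', hB]
    · rw [update_self, hC', hC]
  · rw [sum_range_succ, sum_range_succ, update_self, update_of_ne (by omega), update_self,
      ← hsum']
    congr 2
    refine sum_congr rfl fun j hj => ?_
    rw [mem_range] at hj
    rw [update_of_ne (by omega), update_of_ne (by omega)]

lemma isZeroSumXCoords_chain (x u : ℕ → F) (h₁ : IsZeroSumXCoords W ![u 1, x 1, x 2]) {n : ℕ}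
    (h₂ : ∀ i, 1 ≤ i → i < n → IsZeroSumXCoords W ![u i, u (i + 1), x (i + 2)]) (hn : 1 ≤ n) :
    IsZeroSumXCoords W (fun j : Fin (n + 2) => if (j : ℕ) ≤ n then x (j + 1) else u n) := by
  induction n with
  | zero => omega
  | succ n ih =>
    rcases Nat.eq_zero_or_pos n with rfl | hn
    · convert h₁.comp_equiv (finRotate 3) using 1
      funext i
      fin_cases i <;> rfl
    · refine IsZeroSumXCoords.splice (v := fun j => if j ≤ n then x (j + 1) else u n)
        (w := fun j => if j ≤ n + 1 then x (j + 1) else u (n + 1))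
        (ih (fun i hi hin => h₂ i hi (by omega)) hn) (fun j hj => ?_) ?_
      · simp only [hj, show j ≤ n + 1 by omega, if_true]
      · convert (h₂ n hn (by omega)).comp_equiv (Equiv.swap 1 2) using 1
        funext i
        fin_cases i <;> simp [Equiv.swap_apply_of_ne_of_ne]

end WeierstrassCurve.Affine

open WeierstrassCurve.Affine

open Classical in
/-- every solution in the algebraic closure of the chain system
`S₃(u₁,x₁,x₂) = 0`, `S₃(u_i,u_{i+1},x_{i+2}) = 0` for `1 ≤ i ≤ t−3`,
`S₃(u_{t−2},x_t,R_X) = 0` yields a solution of `S_{t+1}(x₁,…,x_t,R_X) = 0`, where the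
summation polynomials `Sₘ` of an elliptic curve `E` over `K` are characterized by:
`Sₘ(x₁,…,xₘ) = 0` iff there are points of `E` over the algebraic closure with these
`X`-coordinates summing to `∞`. -/
theorem stmt7 {K : Type*} [Field K] (W : WeierstrassCurve.Affine K)
    (S : ∀ m : ℕ, MvPolynomial (Fin m) K)
    (hS : ∀ (m : ℕ) (x : Fin m → AlgebraicClosure K),
      eval x ((S m).map (algebraMap K (AlgebraicClosure K))) = 0 ↔
        ∃ (y : Fin m → AlgebraicClosure K)
          (h : ∀ i, (W.baseChange (AlgebraicClosure K)).toAffine.Nonsingular (x i) (y i)),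
          ∑ i, Affine.Point.some (x i) (y i) (h i) = 0)
    (t : ℕ) (ht : 3 ≤ t)
    (x u : ℕ → AlgebraicClosure K) (RX : AlgebraicClosure K)
    (h1 : eval ![u 1, x 1, x 2] ((S 3).map (algebraMap K (AlgebraicClosure K))) = 0)
    (h2 : ∀ i, 1 ≤ i → i ≤ t - 3 →
      eval ![u i, u (i + 1), x (i + 2)] ((S 3).map (algebraMap K (AlgebraicClosure K))) = 0)
    (h3 : eval ![u (t - 2), x t, RX] ((S 3).map (algebraMap K (AlgebraicClosure K))) = 0) :
    eval (fun i : Fin (t + 1) => if (i : ℕ) < t then x ((i : ℕ) + 1) else RX)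
      ((S (t + 1)).map (algebraMap K (AlgebraicClosure K))) = 0 := by
  obtain ⟨k, rfl⟩ : ∃ k, t = k + 2 := ⟨t - 2, by omega⟩
  have hS' : ∀ m (x : Fin m → AlgebraicClosure K),
      eval x ((S m).map (algebraMap K (AlgebraicClosure K))) = 0 ↔
        IsZeroSumXCoords (W.baseChange (AlgebraicClosure K)).toAffine x :=
    fun m x => (hS m x).trans isZeroSumXCoords_iff.symm
  rw [hS'] at h1 h3 ⊢
  have hchain := isZeroSumXCoords_chain x u h1 (n := k)
    (fun i hi hik => (hS' 3 _).1 (h2 i hi (by omega))) (by omega)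
  refine IsZeroSumXCoords.splice (v := fun j => if j ≤ k then x (j + 1) else u k)
    (w := fun j => if j < k + 2 then x (j + 1) else RX) hchain
    (fun j hj => ?_) ?_
  · simp only [hj, show j < k + 2 by omega, if_true]
  · convert h3 using 2 <;> simp
end

section
/- Let n ≥ 1 and fix a basis of F_{2ⁿ}/F₂. Every coordinate Boolean function of the map (x₁,x₂,x₃) ↦ x₁ · S₃(x₁,x₂,x₃), where S₃(x₁,x₂,x₃) = (x₁x₂+x₁x₃+x₂x₃)² + x₁x₂x₃ + B over F_{2ⁿ}, has total degree at most 3 as a Boolean polynomial (even though the naive bound deg x₁ + deg S₃ = 4 would suggest degree 4). -/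
/-!
Over `F₂` every element `a` satisfies `a² = a`, so the Frobenius `x ↦ x²` of `F_{2ⁿ}` is
`F₂`-linear and does not raise the algebraic degree of a map `F₂^{3n} → F_{2ⁿ}`, while
products add degrees. In characteristic `2` one has
`x₁S₃ = x₁·x₁²·x₂² + x₁·x₁²·x₃² + x₁·x₂²·x₃² + x₁²·x₂·x₃ + x₁·B`,
where every term is a product of three maps of degree `1`, or of degree `1` times a constant.
-/

open MvPolynomial

namespace MvPolynomial

section AlgDegree

variable (K σ M : Type*) [CommRing K] [AddCommGroup M] [Module K M]

/-- Over `K = F₂` these are the vectorial Boolean functions of algebraic degree at most `d`. -/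
def algDegreeLE (d : ℕ) : Submodule K ((σ → K) → M) :=
  Submodule.span K
    {f | ∃ p : MvPolynomial σ K, p.totalDegree ≤ d ∧ ∃ v : M, f = fun c => eval c p • v}

variable {K σ M}

theorem algDegreeLE_mono {d d' : ℕ} (h : d ≤ d') :
    algDegreeLE K σ M d ≤ algDegreeLE K σ M d' :=
  Submodule.span_mono fun _ ⟨p, hp, v, hf⟩ => ⟨p, hp.trans h, v, hf⟩

theorem const_mem_algDegreeLE_zero (v : M) : (fun _ => v) ∈ algDegreeLE K σ M 0 :=
  Submodule.subset_span ⟨1, by simp, v, by simp⟩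

theorem sum_smul_mem_algDegreeLE_one {ι : Type*} [Fintype ι] (g : ι → σ) (v : ι → M) :
    (fun c : σ → K => ∑ i, c (g i) • v i) ∈ algDegreeLE K σ M 1 := by
  rw [← Finset.sum_fn]
  exact Submodule.sum_mem _ fun i _ =>
    Submodule.subset_span ⟨X (g i), (totalDegree_monomial_le _ _).trans_eq (by simp), v i, by simp⟩

theorem exists_totalDegree_le_eval_eq {d : ℕ} {f : (σ → K) → M}
    (hf : f ∈ algDegreeLE K σ M d) (φ : M →ₗ[K] K) :
    ∃ P : MvPolynomial σ K, P.totalDegree ≤ d ∧ ∀ c, eval c P = φ (f c) := by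
  induction hf using Submodule.span_induction with
  | mem f hf =>
    obtain ⟨p, hp, v, rfl⟩ := hf
    exact ⟨φ v • p, (totalDegree_smul_le _ _).trans hp, fun c => by simp [mul_comm]⟩
  | zero => exact ⟨0, by simp, by simp⟩
  | add f g _ _ hf hg =>
    obtain ⟨P, hP, hPf⟩ := hf
    obtain ⟨Q, hQ, hQg⟩ := hg
    exact ⟨P + Q, (totalDegree_add _ _).trans (max_le hP hQ), fun c => by simp [hPf, hQg]⟩
  | smul a f _ hf =>
    obtain ⟨P, hP, hPf⟩ := hf
    exact ⟨a • P, (totalDegree_smul_le _ _).trans hP, fun c => by simp [hPf]⟩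

end AlgDegree

section Algebra

variable {K σ A : Type*} [CommRing K] [CommRing A] [Algebra K A]

theorem mul_mem_algDegreeLE {d₁ d₂ : ℕ} {f g : (σ → K) → A}
    (hf : f ∈ algDegreeLE K σ A d₁) (hg : g ∈ algDegreeLE K σ A d₂) :
    f * g ∈ algDegreeLE K σ A (d₁ + d₂) := by
  have hfg := Submodule.mul_mem_mul hf hg
  rw [algDegreeLE, algDegreeLE, Submodule.span_mul_span] at hfg
  refine Submodule.span_mono ?_ hfg
  rintro _ ⟨_, ⟨p, hp, v, rfl⟩, _, ⟨q, hq, w, rfl⟩, rfl⟩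
  refine ⟨p * q, (totalDegree_mul _ _).trans (add_le_add hp hq), v * w, ?_⟩
  ext c
  simp [smul_smul, mul_comm]

end Algebra

/-- The Frobenius is additive and fixes the scalars `ZMod p`, so it only acts on the vectors. -/
theorem pow_char_mem_algDegreeLE {p : ℕ} [Fact p.Prime] {σ A : Type*} [CommRing A]
    [Algebra (ZMod p) A] [CharP A p] {d : ℕ} {f : (σ → ZMod p) → A}
    (hf : f ∈ algDegreeLE (ZMod p) σ A d) : f ^ p ∈ algDegreeLE (ZMod p) σ A d := by
  induction hf using Submodule.span_induction with
  | mem f hf =>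
    obtain ⟨q, hq, v, rfl⟩ := hf
    refine Submodule.subset_span ⟨q, hq, v ^ p, ?_⟩
    ext c
    simp [smul_pow, ZMod.pow_card]
  | zero => simp [(Fact.out : p.Prime).ne_zero]
  | add f g _ _ hf hg =>
    have : (f + g) ^ p = f ^ p + g ^ p := by ext c; simp [add_pow_char]
    exact this ▸ Submodule.add_mem _ hf hg
  | smul a f _ hf =>
    rw [smul_pow, ZMod.pow_card]
    exact Submodule.smul_mem _ a hf

end MvPolynomial

theorem mul_S3_eq_of_charP_two {R : Type*} [CommRing R] [CharP R 2] (x y z B : R) :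
    x * ((x * y + x * z + y * z) ^ 2 + x * y * z + B)
      = x * x ^ 2 * y ^ 2 + x * x ^ 2 * z ^ 2 + x * y ^ 2 * z ^ 2 + x ^ 2 * y * z + x * B := by
  linear_combination
    (x * (x ^ 2 * y * z + x * y ^ 2 * z + x * y * z ^ 2)) * CharTwo.two_eq_zero (R := R)

theorem stmt10_general (n : ℕ) (F : Type*) [Field F] [Algebra (ZMod 2) F]
    (b : Module.Basis (Fin n) (ZMod 2) F) (B : F) (j : Fin n) :
    ∃ P : MvPolynomial (Fin 3 × Fin n) (ZMod 2), P.totalDegree ≤ 3 ∧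
      ∀ c : Fin 3 × Fin n → ZMod 2,
        MvPolynomial.eval c P =
          b.repr
            ((∑ i, c (0, i) • b i) *
              (((∑ i, c (0, i) • b i) * (∑ i, c (1, i) • b i)
                  + (∑ i, c (0, i) • b i) * (∑ i, c (2, i) • b i)
                  + (∑ i, c (1, i) • b i) * (∑ i, c (2, i) • b i)) ^ 2
                + (∑ i, c (0, i) • b i) * (∑ i, c (1, i) • b i) * (∑ i, c (2, i) • b i)
                + B)) j := by
  have : CharP F 2 := charP_of_injective_algebraMap (algebraMap (ZMod 2) F).injective 2
  let x (k : Fin 3) : (Fin 3 × Fin n → ZMod 2) → F := fun c => ∑ i, c (k, i) • b i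
  have hx (k : Fin 3) : x k ∈ algDegreeLE (ZMod 2) _ F 1 :=
    sum_smul_mem_algDegreeLE_one (fun i => (k, i)) b
  have hx2 (k : Fin 3) : x k ^ 2 ∈ algDegreeLE (ZMod 2) _ F 1 :=
    pow_char_mem_algDegreeLE (hx k)
  have hB := const_mem_algDegreeLE_zero (K := ZMod 2) (σ := Fin 3 × Fin n) B
  have hf : x 0 * x 0 ^ 2 * x 1 ^ 2 + x 0 * x 0 ^ 2 * x 2 ^ 2 + x 0 * x 1 ^ 2 * x 2 ^ 2
      + x 0 ^ 2 * x 1 * x 2 + x 0 * (fun _ => B) ∈ algDegreeLE (ZMod 2) _ F 3 := by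
    have h3 (f g h : (Fin 3 × Fin n → ZMod 2) → F) (hf : f ∈ algDegreeLE (ZMod 2) _ F 1)
        (hg : g ∈ algDegreeLE (ZMod 2) _ F 1) (hh : h ∈ algDegreeLE (ZMod 2) _ F 1) :
        f * g * h ∈ algDegreeLE (ZMod 2) _ F 3 :=
      (mul_mem_algDegreeLE (mul_mem_algDegreeLE hf hg) hh :)
    refine add_mem (add_mem (add_mem (add_mem ?_ ?_) ?_) ?_)
      (algDegreeLE_mono (by norm_num) (mul_mem_algDegreeLE (hx 0) hB))
    · exact h3 _ _ _ (hx 0) (hx2 0) (hx2 1)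
    · exact h3 _ _ _ (hx 0) (hx2 0) (hx2 2)
    · exact h3 _ _ _ (hx 0) (hx2 1) (hx2 2)
    · exact h3 _ _ _ (hx2 0) (hx 1) (hx 2)
  obtain ⟨P, hP, hPf⟩ := exists_totalDegree_le_eval_eq hf (Finsupp.lapply j ∘ₗ b.repr.toLinearMap)
  refine ⟨P, hP, fun c => ?_⟩
  rw [hPf, mul_S3_eq_of_charP_two]
  rfl

/-- Weil descent of `x₁ · S₃` over `F_{2ⁿ}`.  Every coordinate Boolean
function of the map `(x₁,x₂,x₃) ↦ x₁·S₃(x₁,x₂,x₃)`, with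
`S₃ = (x₁x₂ + x₁x₃ + x₂x₃)² + x₁x₂x₃ + B`, is represented by a polynomial over `F₂` of
total degree at most `3` (not `4`) in the `3n` Boolean variables. -/
theorem stmt10 (n : ℕ) (hn : 1 ≤ n) (F : Type*) [Field F] [Algebra (ZMod 2) F]
    (b : Module.Basis (Fin n) (ZMod 2) F) (B : F) (j : Fin n) :
    ∃ P : MvPolynomial (Fin 3 × Fin n) (ZMod 2), P.totalDegree ≤ 3 ∧
      ∀ c : Fin 3 × Fin n → ZMod 2,
        MvPolynomial.eval c P =
          b.repr
            ((∑ i, c (0, i) • b i) *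
              (((∑ i, c (0, i) • b i) * (∑ i, c (1, i) • b i)
                  + (∑ i, c (0, i) • b i) * (∑ i, c (2, i) • b i)
                  + (∑ i, c (1, i) • b i) * (∑ i, c (2, i) • b i)) ^ 2
                + (∑ i, c (0, i) • b i) * (∑ i, c (1, i) • b i) * (∑ i, c (2, i) • b i)
                + B)) j :=
  stmt10_general n F b B j
end

section
/- In a field of characteristic 2, for any elements a, b and any z, the polynomial S₃(x₁,x₂,z) = (x₁x₂ + x₁z + x₂z)² + x₁x₂z + B, viewed via Weil descent over F_{2ⁿ} with z a constant, has coordinate Boolean functions of total degree at most 2. -/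
/-! In coordinates with respect to an `F₂`-basis, `x = ∑ cᵢ bᵢ` has the variables `cᵢ` as its
coordinates, the coordinates of a product are bilinear in those of the factors, and `F₂`-linear
maps (multiplication by the constant `z`, and the Frobenius `x ↦ x²`) act on coordinates by a
constant matrix. So degrees add under products and are not raised by `z·` or squaring, which
bounds both `(x₁x₂ + x₁z + x₂z)²` and `x₁x₂z` by degree `2`. -/

open MvPolynomial Module

section AlgDegree

variable {R σ : Type*} [CommRing R]

def HasAlgDegreeLE (d : ℕ) (f : (σ → R) → R) : Prop :=
  ∃ P : MvPolynomial σ R, P.totalDegree ≤ d ∧ ∀ c, eval c P = f c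

namespace HasAlgDegreeLE

variable {d e : ℕ} {f g : (σ → R) → R}

theorem const (a : R) : HasAlgDegreeLE (σ := σ) 0 fun _ => a :=
  ⟨C a, (totalDegree_C a).le, fun _ => eval_C a⟩

theorem apply (s : σ) : HasAlgDegreeLE 1 fun c : σ → R => c s :=
  ⟨X s, (totalDegree_monomial_le _ _).trans (by simp), fun _ => eval_X _⟩

theorem congr (hf : HasAlgDegreeLE d f) (hfg : ∀ c, f c = g c) : HasAlgDegreeLE d g :=
  funext hfg ▸ hf

theorem mono (hf : HasAlgDegreeLE d f) (hde : d ≤ e) : HasAlgDegreeLE e f :=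
  let ⟨P, hP, hPf⟩ := hf
  ⟨P, hP.trans hde, hPf⟩

theorem mul (hf : HasAlgDegreeLE d f) (hg : HasAlgDegreeLE e g) :
    HasAlgDegreeLE (d + e) fun c => f c * g c :=
  let ⟨P, hP, hPf⟩ := hf
  let ⟨Q, hQ, hQg⟩ := hg
  ⟨P * Q, (totalDegree_mul P Q).trans (add_le_add hP hQ), fun c => by simp [hPf, hQg]⟩

theorem mul_const (hf : HasAlgDegreeLE d f) (a : R) : HasAlgDegreeLE d fun c => f c * a :=
  hf.mul (const a)

theorem sum {ι : Type*} (s : Finset ι) {f : ι → (σ → R) → R}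
    (hf : ∀ i, HasAlgDegreeLE d (f i)) : HasAlgDegreeLE d fun c => ∑ i ∈ s, f i c := by
  choose P hP hPf using hf
  refine ⟨∑ i ∈ s, P i, ?_, fun c => by simp [hPf]⟩
  exact (totalDegree_finsetSum s P).trans (Finset.sup_le fun i _ => hP i)

end HasAlgDegreeLE

end AlgDegree

section BasisRepr

variable {R A ι : Type*} [CommRing R] [Ring A] [Algebra R A] [Fintype ι]

theorem Module.Basis.repr_linearMap_apply (b : Basis ι R A) (L : A →ₗ[R] A) (x : A) (j : ι) :
    b.repr (L x) j = ∑ k, b.repr x k * b.repr (L (b k)) j := by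
  conv_lhs => rw [← b.sum_repr x]
  simp only [map_sum, map_smul, Finsupp.coe_finsetSum, Finset.sum_apply, Finsupp.smul_apply,
    smul_eq_mul]

theorem Module.Basis.repr_mul_apply (b : Basis ι R A) (x y : A) (j : ι) :
    b.repr (x * y) j = ∑ i, ∑ k, b.repr x i * b.repr y k * b.repr (b i * b k) j := by
  conv_lhs => rw [← b.sum_repr x, ← b.sum_repr y]
  simp only [Finset.sum_mul_sum, smul_mul_smul_comm, map_sum, map_smul, Finsupp.coe_finsetSum,
    Finset.sum_apply, Finsupp.smul_apply, smul_eq_mul]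

end BasisRepr

section CoordDegree

variable {R A ι σ : Type*} [CommRing R] [Ring A] [Algebra R A]

def HasCoordDegreeLE (b : Basis ι R A) (d : ℕ) (g : (σ → R) → A) : Prop :=
  ∀ j, HasAlgDegreeLE d fun c => b.repr (g c) j

namespace HasCoordDegreeLE

variable {b : Basis ι R A} {d e : ℕ} {g h : (σ → R) → A}

theorem const (b : Basis ι R A) (a : A) : HasCoordDegreeLE (σ := σ) b 0 fun _ => a :=
  fun _ => HasAlgDegreeLE.const _

theorem mono (hg : HasCoordDegreeLE b d g) (hde : d ≤ e) : HasCoordDegreeLE b e g :=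
  fun j => (hg j).mono hde

theorem add (hg : HasCoordDegreeLE b d g) (hh : HasCoordDegreeLE b d h) :
    HasCoordDegreeLE b d fun c => g c + h c := by
  intro j
  obtain ⟨P, hP, hPg⟩ := hg j
  obtain ⟨Q, hQ, hQh⟩ := hh j
  exact ⟨P + Q, (totalDegree_add P Q).trans (max_le hP hQ), fun c => by simp [hPg, hQh]⟩

variable [Fintype ι]

theorem basis_sum (b : Basis ι R A) (v : ι → σ) :
    HasCoordDegreeLE b 1 fun c => ∑ i, c (v i) • b i := by
  intro j
  simpa only [b.repr_sum_self] using HasAlgDegreeLE.apply (v j)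

theorem map (hg : HasCoordDegreeLE b d g) (L : A →ₗ[R] A) :
    HasCoordDegreeLE b d fun c => L (g c) := fun j =>
  (HasAlgDegreeLE.sum Finset.univ fun k => (hg k).mul_const _).congr fun c =>
    (b.repr_linearMap_apply L (g c) j).symm

theorem mul (hg : HasCoordDegreeLE b d g) (hh : HasCoordDegreeLE b e h) :
    HasCoordDegreeLE b (d + e) fun c => g c * h c := fun j =>
  (HasAlgDegreeLE.sum Finset.univ fun i => HasAlgDegreeLE.sum Finset.univ fun k =>
    ((hg i).mul (hh k)).mul_const _).congr fun c => (b.repr_mul_apply (g c) (h c) j).symm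

theorem mul_const (hg : HasCoordDegreeLE b d g) (z : A) :
    HasCoordDegreeLE b d fun c => g c * z :=
  hg.map (LinearMap.mulRight R z)

end HasCoordDegreeLE

end CoordDegree

theorem HasCoordDegreeLE.pow_char {A ι σ : Type*} [CommRing A] {p : ℕ} [Fact p.Prime]
    [CharP A p] [Algebra (ZMod p) A] [Fintype ι] {b : Basis ι (ZMod p) A} {d : ℕ}
    {g : (σ → ZMod p) → A} (hg : HasCoordDegreeLE b d g) :
    HasCoordDegreeLE b d fun c => g c ^ p :=
  hg.map ((frobenius A p).toAddMonoidHom.toZModLinearMap p)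

theorem stmt11_general (n : ℕ) (F : Type*) [Field F] [Algebra (ZMod 2) F]
    (b : Module.Basis (Fin n) (ZMod 2) F) (z B : F) (j : Fin n) :
    ∃ P : MvPolynomial (Fin 2 × Fin n) (ZMod 2), P.totalDegree ≤ 2 ∧
      ∀ c : Fin 2 × Fin n → ZMod 2,
        MvPolynomial.eval c P =
          b.repr
            (((∑ i, c (0, i) • b i) * (∑ i, c (1, i) • b i)
                + (∑ i, c (0, i) • b i) * z + (∑ i, c (1, i) • b i) * z) ^ 2
              + (∑ i, c (0, i) • b i) * (∑ i, c (1, i) • b i) * z + B) j := by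
  have : CharP F 2 := charP_of_injective_algebraMap' (ZMod 2) 2
  have hx : ∀ k : Fin 2, HasCoordDegreeLE b 1 fun c => ∑ i, c (k, i) • b i :=
    fun k => .basis_sum b (k, ·)
  have hx₁x₂ : HasCoordDegreeLE b 2 _ := (hx 0).mul (hx 1)
  have hinner : HasCoordDegreeLE b 2 _ :=
    (hx₁x₂.add (((hx 0).mul_const z).mono one_le_two)).add
      (((hx 1).mul_const z).mono one_le_two)
  have hB : HasCoordDegreeLE b 2 fun _ : Fin 2 × Fin n → ZMod 2 => B :=
    (HasCoordDegreeLE.const b B).mono (Nat.zero_le 2)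
  exact (hinner.pow_char.add (hx₁x₂.mul_const z)).add hB j

/-- Weil descent of `S₃(x₁,x₂,z)` over `F_{2ⁿ}` with `z` a constant.
Every coordinate Boolean function of
`(x₁,x₂) ↦ (x₁x₂ + x₁z + x₂z)² + x₁x₂z + B` is represented by a polynomial over `F₂`
of total degree at most `2` in the `2n` Boolean variables. -/
theorem stmt11 (n : ℕ) (hn : 1 ≤ n) (F : Type*) [Field F] [Algebra (ZMod 2) F]
    (b : Module.Basis (Fin n) (ZMod 2) F) (z B : F) (j : Fin n) :
    ∃ P : MvPolynomial (Fin 2 × Fin n) (ZMod 2), P.totalDegree ≤ 2 ∧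
      ∀ c : Fin 2 × Fin n → ZMod 2,
        MvPolynomial.eval c P =
          b.repr
            (((∑ i, c (0, i) • b i) * (∑ i, c (1, i) • b i)
                + (∑ i, c (0, i) • b i) * z + (∑ i, c (1, i) • b i) * z) ^ 2
              + (∑ i, c (0, i) • b i) * (∑ i, c (1, i) • b i) * z + B) j :=
  stmt11_general n F b z B j
end

section
/- Let E: Y² + XY = X³ + AX² + B be an elliptic curve over a field K of characteristic 2 with B ≠ 0, and let P₁ = (x₁,y₁), P₂ = (x₂,y₂) be affine points of E with P₁ + P₂ = (x₃, y₃) an affine point. Then (x₁x₂ + x₁x₃ + x₂x₃)² + x₁x₂x₃ = B, i.e., S₃(x₁,x₂,x₃) evaluated with the negation convention (P₁ + P₂ + (−(P₁+P₂)) = ∞) vanishes; note negation on E preserves the X-coordinate. -/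
/-!
The chord (or tangent) through `P₁` and `P₂` meets the curve in the three points `P₁`, `P₂` and
`-(P₁ + P₂)`, whose `X`-coordinates are therefore the roots of the cubic obtained by substituting the
line into the Weierstrass equation. Comparing its coefficients with Vieta's formulas gives
`x₁x₂ + x₁x₃ + x₂x₃` and `x₁x₂x₃` in terms of the line `Y = ℓX + c`; on `Y² + XY = X³ + AX² + B` in
characteristic `2` they are `c` and `c² + B`, so the claimed identity is `c² + c² + B = B`.
-/

open WeierstrassCurve

namespace WeierstrassCurve.Affine

variable {F : Type*} [Field F] [DecidableEq F] {W : Affine F} {x₁ x₂ y₁ y₂ : F}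

lemma vieta_addX_slope (h₁ : W.Equation x₁ y₁) (h₂ : W.Equation x₂ y₂)
    (hxy : ¬(x₁ = x₂ ∧ y₁ = W.negY x₂ y₂)) :
    let ℓ := W.slope x₁ x₂ y₁ y₂
    let x₃ := W.addX x₁ x₂ ℓ
    x₁ * x₂ + x₁ * x₃ + x₂ * x₃ =
        2 * x₁ * ℓ ^ 2 + (W.a₁ * x₁ - 2 * y₁ - W.a₃) * ℓ + (-W.a₁ * y₁ + W.a₄) ∧
      x₁ * x₂ * x₃ = x₁ ^ 2 * ℓ ^ 2 - (2 * x₁ * y₁ + W.a₃ * x₁) * ℓ + (y₁ ^ 2 + W.a₃ * y₁ - W.a₆) := by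
  have h := addPolynomial_slope h₁ h₂ hxy
  rw [addPolynomial_eq, neg_inj, Cubic.prod_X_sub_C_eq, Cubic.toPoly_injective] at h
  exact ⟨congrArg Cubic.c h.symm, by linear_combination -congrArg Cubic.d h.symm⟩

lemma Point.addX_slope_eq_of_add_eq_some {x₃ y₃ : F} {h₁ : W.Nonsingular x₁ y₁}
    {h₂ : W.Nonsingular x₂ y₂} {h₃ : W.Nonsingular x₃ y₃}
    (h : Point.some x₁ y₁ h₁ + Point.some x₂ y₂ h₂ = Point.some x₃ y₃ h₃) :
    ¬(x₁ = x₂ ∧ y₁ = W.negY x₂ y₂) ∧ W.addX x₁ x₂ (W.slope x₁ x₂ y₁ y₂) = x₃ := by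
  by_cases hxy : x₁ = x₂ ∧ y₁ = W.negY x₂ y₂
  · rw [Point.add_of_Y_eq hxy.1 hxy.2] at h
    cases h
  · rw [Point.add_some hxy, Point.some.injEq] at h
    exact ⟨hxy, h.1⟩

end WeierstrassCurve.Affine

open Classical in
theorem stmt17_general {K : Type*} [Field K] [CharP K 2] (A B : K)
    (W : WeierstrassCurve.Affine K)
    (hW : W = { a₁ := 1, a₂ := A, a₃ := 0, a₄ := 0, a₆ := B })
    (x₁ y₁ x₂ y₂ x₃ y₃ : K)
    (h₁ : W.Nonsingular x₁ y₁) (h₂ : W.Nonsingular x₂ y₂) (h₃ : W.Nonsingular x₃ y₃)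
    (hadd : Affine.Point.some x₁ y₁ h₁ + Affine.Point.some x₂ y₂ h₂ = Affine.Point.some x₃ y₃ h₃) :
    (x₁ * x₂ + x₁ * x₃ + x₂ * x₃) ^ 2 + x₁ * x₂ * x₃ = B := by
  obtain ⟨hxy, hx₃⟩ := Affine.Point.addX_slope_eq_of_add_eq_some hadd
  obtain ⟨he₂, he₃⟩ := Affine.vieta_addX_slope h₁.1 h₂.1 hxy
  subst hW
  generalize Affine.slope _ x₁ x₂ y₁ y₂ = ℓ at hx₃ he₂ he₃
  rw [hx₃] at he₂ he₃
  have h2 : (2 : K) = 0 := CharTwo.two_eq_zero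
  replace he₂ : x₁ * x₂ + x₁ * x₃ + x₂ * x₃ = x₁ * ℓ + y₁ := by
    linear_combination he₂ + (x₁ * ℓ ^ 2 - y₁ * ℓ - y₁) * h2
  replace he₃ : x₁ * x₂ * x₃ = (x₁ * ℓ + y₁) ^ 2 + B := by
    linear_combination he₃ - (2 * x₁ * y₁ * ℓ + B) * h2
  rw [he₂, he₃]
  linear_combination (x₁ * ℓ + y₁) ^ 2 * h2

open Classical in
/-- on the curve `Y² + XY = X³ + AX² + B` over a field of characteristic 2
with `B ≠ 0`, if affine points `P₁ = (x₁,y₁)` and `P₂ = (x₂,y₂)` have affine sum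
`P₁ + P₂ = (x₃,y₃)`, then `(x₁x₂ + x₁x₃ + x₂x₃)² + x₁x₂x₃ = B`. -/
theorem stmt17 {K : Type*} [Field K] [CharP K 2] (A B : K) (hB : B ≠ 0)
    (W : WeierstrassCurve.Affine K)
    (hW : W = { a₁ := 1, a₂ := A, a₃ := 0, a₄ := 0, a₆ := B })
    (x₁ y₁ x₂ y₂ x₃ y₃ : K)
    (h₁ : W.Nonsingular x₁ y₁) (h₂ : W.Nonsingular x₂ y₂) (h₃ : W.Nonsingular x₃ y₃)
    (hadd : Affine.Point.some x₁ y₁ h₁ + Affine.Point.some x₂ y₂ h₂ = Affine.Point.some x₃ y₃ h₃) :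
    (x₁ * x₂ + x₁ * x₃ + x₂ * x₃) ^ 2 + x₁ * x₂ * x₃ = B :=
  stmt17_general A B W hW x₁ y₁ x₂ y₂ x₃ y₃ h₁ h₂ h₃ hadd
end
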